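/- arXiv:1512.07689 — 5 statements merged into one kernel-verified Lean document; each statement's English description precedes it below -/
import Mathlib

section
/- Let n ≥ 2 be an integer, let λ₁, …, λₙ be positive real numbers, and let A > 0. The function (A₁, …, Aₙ) ↦ λ₁A₁^{3/2} + ⋯ + λₙAₙ^{3/2} on the set K = { (A₁,…,Aₙ) : Aᵢ ≥ 0 and A₁ + ⋯ + Aₙ = A } attains its minimum at a point of K if and only if λ₁²A₁ = λ₂²A₂ = ⋯ = λₙ²Aₙ at that point. -/
open Finset

/-- Proposition 2 (analytic content): the total volume `∑ λᵢ Aᵢ^{3/2}` on the set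
`K = {Aᵢ ≥ 0, ∑ Aᵢ = A}` attains its minimum at a point of `K` iff
`λ₁²A₁ = λ₂²A₂ = ⋯ = λₙ²Aₙ` at that point. -/
theorem stmt_8 (n : ℕ) (hn : 2 ≤ n) (lam : Fin n → ℝ) (hlam : ∀ i, 0 < lam i)
    (A : ℝ) (hA : 0 < A) (As : Fin n → ℝ) (hAs : ∀ i, 0 ≤ As i) (hsum : ∑ i, As i = A) :
    (∀ y : Fin n → ℝ, (∀ i, 0 ≤ y i) → ∑ i, y i = A →
        ∑ i, lam i * As i ^ ((3 : ℝ) / 2) ≤ ∑ i, lam i * y i ^ ((3 : ℝ) / 2)) ↔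
      ∀ i j, lam i ^ 2 * As i = lam j ^ 2 * As j := by
  have hn0 : 0 < n := lt_of_lt_of_le (by norm_num) hn
  haveI : Nonempty (Fin n) := Fin.pos_iff_nonempty.mp hn0
  set g : ℝ → ℝ := fun x => x ^ ((3 : ℝ) / 2) with hg_def
  have hg : StrictConvexOn ℝ (Set.Ici 0) g := strictConvexOn_rpow (by norm_num)
  set S : ℝ := ∑ i, (lam i ^ 2)⁻¹ with hS_def
  have hS : 0 < S := by
    refine Finset.sum_pos (fun i _ => ?_) univ_nonempty
    have := hlam i; positivity
  set w : Fin n → ℝ := fun i => (lam i ^ 2)⁻¹ / S with hw_def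
  have hw : ∀ i, 0 < w i := by
    intro i; have := hlam i; simp only [hw_def]; positivity
  have hw1 : ∑ i, w i = 1 := by
    rw [hw_def, ← Finset.sum_div, ← hS_def, div_self hS.ne']
  -- key identity
  have key : ∀ y : Fin n → ℝ, (∀ i, 0 ≤ y i) →
      ∑ i, lam i * y i ^ ((3 : ℝ) / 2) = S * ∑ i, w i * g (lam i ^ 2 * y i) := by
    intro y hy
    rw [Finset.mul_sum]
    refine Finset.sum_congr rfl fun i _ => ?_
    have hli := hlam i
    have h1 : g (lam i ^ 2 * y i) = lam i ^ 3 * y i ^ ((3 : ℝ) / 2) := by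
      rw [hg_def]
      dsimp only
      rw [Real.mul_rpow (by positivity) (hy i)]
      congr 1
      rw [← Real.rpow_natCast (lam i) 2, ← Real.rpow_mul hli.le,
        ← Real.rpow_natCast (lam i) 3]
      norm_num
    rw [h1, hw_def]
    field_simp
  -- weighted average of the points
  have keysum : ∀ y : Fin n → ℝ, ∑ i, y i = A →
      ∑ i, w i * (lam i ^ 2 * y i) = A / S := by
    intro y hsy
    have : ∀ i, w i * (lam i ^ 2 * y i) = y i / S := by
      intro i
      have hli := (hlam i).ne'
      simp only [hw_def]
      field_simp
    rw [Finset.sum_congr rfl fun i _ => this i, ← Finset.sum_div, hsy]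
  -- Jensen lower bound
  have lower : ∀ y : Fin n → ℝ, (∀ i, 0 ≤ y i) → ∑ i, y i = A →
      S * g (A / S) ≤ ∑ i, lam i * y i ^ ((3 : ℝ) / 2) := by
    intro y hy hsy
    rw [key y hy]
    have hmem : ∀ i ∈ univ, lam i ^ 2 * y i ∈ Set.Ici (0 : ℝ) := fun i _ =>
      mul_nonneg (sq_nonneg _) (hy i)
    have hJ := hg.convexOn.map_sum_le (t := univ) (w := w)
      (p := fun i => lam i ^ 2 * y i) (fun i _ => (hw i).le) hw1 hmem
    simp only [smul_eq_mul] at hJ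
    rw [keysum y hsy] at hJ
    exact mul_le_mul_of_nonneg_left hJ hS.le
  -- strict Jensen
  have strict : ∀ y : Fin n → ℝ, (∀ i, 0 ≤ y i) → ∑ i, y i = A →
      (¬ ∀ i j, lam i ^ 2 * y i = lam j ^ 2 * y j) →
      S * g (A / S) < ∑ i, lam i * y i ^ ((3 : ℝ) / 2) := by
    intro y hy hsy hne
    push_neg at hne
    obtain ⟨i, j, hij⟩ := hne
    rw [key y hy]
    have hmem : ∀ i ∈ univ, lam i ^ 2 * y i ∈ Set.Ici (0 : ℝ) := fun i _ =>
      mul_nonneg (sq_nonneg _) (hy i)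
    have hJ := hg.map_sum_lt (t := univ) (w := w)
      (p := fun i => lam i ^ 2 * y i) (fun i _ => hw i) hw1 hmem
      ⟨i, mem_univ i, j, mem_univ j, hij⟩
    simp only [smul_eq_mul] at hJ
    rw [keysum y hsy] at hJ
    exact mul_lt_mul_of_pos_left hJ hS
  -- equality at a point with constant λᵢ²yᵢ
  have eq_of_const : ∀ y : Fin n → ℝ, (∀ i, 0 ≤ y i) → ∑ i, y i = A →
      (∀ i j, lam i ^ 2 * y i = lam j ^ 2 * y j) →
      ∑ i, lam i * y i ^ ((3 : ℝ) / 2) = S * g (A / S) := by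
    intro y hy hsy hconst
    have hconst' : ∀ i, lam i ^ 2 * y i = A / S := by
      intro i
      have h1 := keysum y hsy
      have h2 : ∑ j, w j * (lam j ^ 2 * y j) = ∑ j, w j * (lam i ^ 2 * y i) :=
        Finset.sum_congr rfl fun j _ => by rw [hconst j i]
      rw [h2, ← Finset.sum_mul, hw1, one_mul] at h1
      exact h1
    rw [key y hy]
    congr 1
    rw [Finset.sum_congr rfl fun i _ => by rw [hconst' i], ← Finset.sum_mul, hw1, one_mul]
  -- the special point
  set x : Fin n → ℝ := fun i => (lam i ^ 2)⁻¹ * (A / S) with hx_def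
  have hx0 : ∀ i, 0 ≤ x i := by
    intro i; have := hlam i; simp only [hx_def]; positivity
  have hxsum : ∑ i, x i = A := by
    simp only [hx_def]
    rw [← Finset.sum_mul, ← hS_def]
    field_simp
  have hxconst : ∀ i j, lam i ^ 2 * x i = lam j ^ 2 * x j := by
    have : ∀ i, lam i ^ 2 * x i = A / S := by
      intro i
      have := (hlam i).ne'
      simp only [hx_def]
      field_simp
    intro i j; rw [this i, this j]
  have hxval := eq_of_const x hx0 hxsum hxconst
  constructor
  · intro hmin
    by_contra hne
    have h1 := hmin x hx0 hxsum
    have h2 := strict As hAs hsum hne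
    rw [hxval] at h1
    linarith
  · intro hconst y hy hsy
    rw [eq_of_const As hAs hsum hconst]
    exact lower y hy hsy
end

section
/- Let n ≥ 2 be an integer, let λ₁, …, λₙ and h and S be positive real numbers. Consider the set K = { (L₁,…,Lₙ) : Lᵢ ≥ 0 and h(L₁ + ⋯ + Lₙ) + 2(λ₁L₁² + ⋯ + λₙLₙ²) = S }. The function (L₁, …, Lₙ) ↦ λ₁L₁² + ⋯ + λₙLₙ² attains its minimum on K at a point if and only if λ₁L₁ = λ₂L₂ = ⋯ = λₙLₙ at that point. -/
/-!
Put `A = ∑ 1/λᵢ` and let `c ≥ 0` solve `c (h + 2c) A = S`. On the constraint surface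
`h ∑ yᵢ + 2 ∑ λᵢ yᵢ² = S` (no sign condition needed) one has the identity
`(h + 4c) (∑ λᵢ yᵢ² - c² A) = h ∑ (λᵢ yᵢ - c)² / λᵢ`,
so the point `yᵢ = c / λᵢ`, which lies on the surface and has nonnegative coordinates, is its
unique minimiser. Conversely, if a nonnegative point of the surface has all `λᵢ yᵢ` equal to
some `c'`, then `c' ≥ 0` and the constraint says exactly that `c'` is such a root.
-/

open Finset

theorem exists_nonneg_mul_add_two_mul_mul_eq {h A S : ℝ} (hA : 0 < A) (hS : 0 ≤ S) :
    ∃ c, 0 ≤ c ∧ c * (h + 2 * c) * A = S := by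
  set E := √(h ^ 2 + 8 * S / A)
  have hE : E ^ 2 * A = h ^ 2 * A + 8 * S := by
    rw [Real.sq_sqrt (by positivity)]
    field_simp
  refine ⟨(E - h) / 4, ?_, ?_⟩
  · have : h ≤ E := Real.le_sqrt_of_sq_le (le_add_of_nonneg_right (by positivity))
    linarith
  · linear_combination hE / 8

section Constraint

variable {ι : Type*} [Fintype ι] {lam : ι → ℝ}

theorem sum_mul_div_sq (hlam : ∀ i, lam i ≠ 0) (c : ℝ) :
    ∑ i, lam i * (c / lam i) ^ 2 = c ^ 2 * ∑ i, (lam i)⁻¹ := by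
  rw [mul_sum]
  refine sum_congr rfl fun i _ => ?_
  field_simp [hlam i]

theorem constraint_div_eq (hlam : ∀ i, lam i ≠ 0) (h c : ℝ) :
    h * ∑ i, c / lam i + 2 * ∑ i, lam i * (c / lam i) ^ 2
      = c * (h + 2 * c) * ∑ i, (lam i)⁻¹ := by
  rw [sum_mul_div_sq hlam]
  simp only [div_eq_mul_inv, ← mul_sum]
  ring

theorem sum_sq_sub_div_eq (hlam : ∀ i, lam i ≠ 0) (c : ℝ) (y : ι → ℝ) :
    ∑ i, (lam i * y i - c) ^ 2 / lam i
      = ∑ i, lam i * y i ^ 2 - 2 * c * ∑ i, y i + c ^ 2 * ∑ i, (lam i)⁻¹ := by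
  rw [mul_sum, mul_sum, ← sum_sub_distrib, ← sum_add_distrib]
  refine sum_congr rfl fun i _ => ?_
  field_simp [hlam i]
  ring

theorem add_four_mul_mul_sub_eq (hlam : ∀ i, lam i ≠ 0) {h c : ℝ} {y : ι → ℝ}
    (hy : h * ∑ i, y i + 2 * ∑ i, lam i * y i ^ 2 = c * (h + 2 * c) * ∑ i, (lam i)⁻¹) :
    (h + 4 * c) * (∑ i, lam i * y i ^ 2 - c ^ 2 * ∑ i, (lam i)⁻¹)
      = h * ∑ i, (lam i * y i - c) ^ 2 / lam i := by
  rw [sum_sq_sub_div_eq hlam]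
  linear_combination 2 * c * hy

variable {h c : ℝ} {y : ι → ℝ}

theorem sq_mul_sum_inv_le (hlam : ∀ i, 0 < lam i) (hh : 0 < h) (hc : 0 ≤ c)
    (hy : h * ∑ i, y i + 2 * ∑ i, lam i * y i ^ 2 = c * (h + 2 * c) * ∑ i, (lam i)⁻¹) :
    c ^ 2 * ∑ i, (lam i)⁻¹ ≤ ∑ i, lam i * y i ^ 2 := by
  have hid := add_four_mul_mul_sub_eq (fun i => (hlam i).ne') hy
  have hD : 0 ≤ ∑ i, (lam i * y i - c) ^ 2 / lam i :=
    sum_nonneg fun i _ => div_nonneg (sq_nonneg _) (hlam i).le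
  have : 0 ≤ (h + 4 * c) * (∑ i, lam i * y i ^ 2 - c ^ 2 * ∑ i, (lam i)⁻¹) := by
    rw [hid]; positivity
  linarith [nonneg_of_mul_nonneg_right this (by linarith)]

theorem mul_eq_of_sum_mul_sq_le (hlam : ∀ i, 0 < lam i) (hh : 0 < h) (hc : 0 ≤ c)
    (hy : h * ∑ i, y i + 2 * ∑ i, lam i * y i ^ 2 = c * (h + 2 * c) * ∑ i, (lam i)⁻¹)
    (hle : ∑ i, lam i * y i ^ 2 ≤ c ^ 2 * ∑ i, (lam i)⁻¹) (i : ι) :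
    lam i * y i = c := by
  have hid := add_four_mul_mul_sub_eq (fun i => (hlam i).ne') hy
  have hterm : ∀ j ∈ univ, 0 ≤ (lam j * y j - c) ^ 2 / lam j :=
    fun j _ => div_nonneg (sq_nonneg _) (hlam j).le
  have hD : ∑ j, (lam j * y j - c) ^ 2 / lam j = 0 := by
    refine le_antisymm ?_ (sum_nonneg hterm)
    have : h * ∑ j, (lam j * y j - c) ^ 2 / lam j ≤ 0 := by
      rw [← hid]; exact mul_nonpos_of_nonneg_of_nonpos (by linarith) (by linarith)
    exact nonpos_of_mul_nonpos_right this hh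
  have := (sum_eq_zero_iff_of_nonneg hterm).mp hD i (mem_univ i)
  rw [div_eq_zero_iff, sq_eq_zero_iff, sub_eq_zero] at this
  exact this.resolve_right (hlam i).ne'

end Constraint

theorem stmt_11_general (n : ℕ) (lam : Fin n → ℝ) (hlam : ∀ i, 0 < lam i)
    (h S : ℝ) (hh : 0 < h)
    (Ls : Fin n → ℝ) (hLs : ∀ i, 0 ≤ Ls i)
    (hcon : h * ∑ i, Ls i + 2 * ∑ i, lam i * Ls i ^ 2 = S) :
    (∀ y : Fin n → ℝ, (∀ i, 0 ≤ y i) →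
        h * ∑ i, y i + 2 * ∑ i, lam i * y i ^ 2 = S →
        ∑ i, lam i * Ls i ^ 2 ≤ ∑ i, lam i * y i ^ 2) ↔
      ∀ i j, lam i * Ls i = lam j * Ls j := by
  have hlam₀ : ∀ i, lam i ≠ 0 := fun i => (hlam i).ne'
  constructor
  · intro hmin i j
    have hA : 0 < ∑ i, (lam i)⁻¹ := sum_pos (fun i _ => inv_pos.mpr (hlam i)) ⟨i, mem_univ i⟩
    have hS : 0 ≤ S := by
      rw [← hcon]
      have := sum_nonneg fun i (_ : i ∈ univ) => mul_nonneg (hlam i).le (sq_nonneg (Ls i))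
      have := sum_nonneg fun i (_ : i ∈ univ) => hLs i
      positivity
    obtain ⟨c, hc, hroot⟩ := exists_nonneg_mul_add_two_mul_mul_eq hA hS
    have hmin_c := hmin (fun i => c / lam i) (fun i => div_nonneg hc (hlam i).le)
      ((constraint_div_eq hlam₀ h c).trans hroot)
    rw [sum_mul_div_sq hlam₀] at hmin_c
    have hLs_eq := mul_eq_of_sum_mul_sq_le hlam hh hc (hcon.trans hroot.symm) hmin_c
    rw [hLs_eq i, hLs_eq j]
  · intro heq y _ hy
    rcases isEmpty_or_nonempty (Fin n) with hι | ⟨⟨i₀⟩⟩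
    · simp
    obtain ⟨c, hc⟩ : ∃ c, ∀ i, lam i * Ls i = c := ⟨_, fun i => heq i i₀⟩
    have hc₀ : 0 ≤ c := hc i₀ ▸ mul_nonneg (hlam i₀).le (hLs i₀)
    obtain rfl : Ls = fun i => c / lam i :=
      funext fun i => by rw [eq_div_iff (hlam₀ i), mul_comm, hc]
    rw [constraint_div_eq hlam₀] at hcon
    rw [sum_mul_div_sq hlam₀]
    exact sq_mul_sum_inv_le hlam hh hc₀ (hy.trans hcon.symm)

/-- Proposition 4 (analytic content): on the constraint set
`K = {Lᵢ ≥ 0, h(L₁+⋯+Lₙ) + 2(λ₁L₁²+⋯+λₙLₙ²) = S}` (fixed total surface area of cylinders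
of common height `h`), the total base area `∑ λᵢ Lᵢ²` attains its minimum on `K` at a
point iff `λ₁L₁ = λ₂L₂ = ⋯ = λₙLₙ` at that point. -/
theorem stmt_11 (n : ℕ) (hn : 2 ≤ n) (lam : Fin n → ℝ) (hlam : ∀ i, 0 < lam i)
    (h S : ℝ) (hh : 0 < h) (hS : 0 < S)
    (Ls : Fin n → ℝ) (hLs : ∀ i, 0 ≤ Ls i)
    (hcon : h * ∑ i, Ls i + 2 * ∑ i, lam i * Ls i ^ 2 = S) :
    (∀ y : Fin n → ℝ, (∀ i, 0 ≤ y i) →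
        h * ∑ i, y i + 2 * ∑ i, lam i * y i ^ 2 = S →
        ∑ i, lam i * Ls i ^ 2 ≤ ∑ i, lam i * y i ^ 2) ↔
      ∀ i j, lam i * Ls i = lam j * Ls j :=
  stmt_11_general n lam hlam h S hh Ls hLs hcon
end

section
/- Let n ≥ 2 be an integer, let λ₁, …, λₙ and h and S be positive real numbers. Then there exists a unique t ≥ 0 such that (h t + 2t²)(λ₁⁻¹ + ⋯ + λₙ⁻¹) = S, and the point (L₁, …, Lₙ) with Lᵢ = t/λᵢ is the unique point of the set K = { (L₁,…,Lₙ) : Lᵢ ≥ 0 and h(L₁ + ⋯ + Lₙ) + 2(λ₁L₁² + ⋯ + λₙLₙ²) = S } at which λ₁L₁ = λ₂L₂ = ⋯ = λₙLₙ; moreover λ₁L₁² + ⋯ + λₙLₙ² evaluated at this point is strictly less than its value at every other point of K. -/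
open Finset

/-- Proposition 4 (uniqueness): there is a unique `t ≥ 0` with
`(ht + 2t²)(λ₁⁻¹ + ⋯ + λₙ⁻¹) = S`; the point `Lᵢ = t/λᵢ` is the unique point of the
constraint set `K` at which all `λᵢLᵢ` coincide, and the total base area `∑ λᵢ Lᵢ²`
at this point is strictly smaller than at every other point of `K`. -/
theorem stmt_12 (n : ℕ) (hn : 2 ≤ n) (lam : Fin n → ℝ) (hlam : ∀ i, 0 < lam i)
    (h S : ℝ) (hh : 0 < h) (hS : 0 < S) :
    ∃ t : ℝ, 0 ≤ t ∧ (h * t + 2 * t ^ 2) * (∑ i, (lam i)⁻¹) = S ∧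
      (∀ t' : ℝ, 0 ≤ t' → (h * t' + 2 * t' ^ 2) * (∑ i, (lam i)⁻¹) = S → t' = t) ∧
      (∀ i, 0 ≤ t / lam i) ∧
      h * ∑ i, t / lam i + 2 * ∑ i, lam i * (t / lam i) ^ 2 = S ∧
      (∀ i j, lam i * (t / lam i) = lam j * (t / lam j)) ∧
      (∀ y : Fin n → ℝ, (∀ i, 0 ≤ y i) →
        h * ∑ i, y i + 2 * ∑ i, lam i * y i ^ 2 = S →
        (∀ i j, lam i * y i = lam j * y j) → y = fun i => t / lam i) ∧
      (∀ y : Fin n → ℝ, (∀ i, 0 ≤ y i) →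
        h * ∑ i, y i + 2 * ∑ i, lam i * y i ^ 2 = S →
        y ≠ (fun i => t / lam i) →
        ∑ i, lam i * (t / lam i) ^ 2 < ∑ i, lam i * y i ^ 2) := by
  have i0 : Fin n := ⟨0, by omega⟩
  set A := ∑ i, (lam i)⁻¹ with hA
  have hApos : 0 < A := Finset.sum_pos (fun i _ => inv_pos.2 (hlam i)) ⟨i0, mem_univ _⟩
  have hAne : A ≠ 0 := ne_of_gt hApos
  set D := Real.sqrt (h ^ 2 + 8 * S / A) with hD
  have hDsq : D ^ 2 = h ^ 2 + 8 * S / A := Real.sq_sqrt (by positivity)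
  have hSA : 0 < 8 * S / A := by positivity
  have hDge : h ≤ D := by nlinarith [Real.sqrt_nonneg (h ^ 2 + 8 * S / A)]
  set t := (D - h) / 4 with htdef
  have htnn : 0 ≤ t := by rw [htdef]; linarith
  -- the quadratic equation for t
  have hteq : (h * t + 2 * t ^ 2) * A = S := by
    have h1 : h * t + 2 * t ^ 2 = (D ^ 2 - h ^ 2) / 8 := by rw [htdef]; ring
    rw [h1, hDsq]
    field_simp
    ring
  -- uniqueness of t
  have htuniq : ∀ t' : ℝ, 0 ≤ t' → (h * t' + 2 * t' ^ 2) * A = S → t' = t := by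
    intro t' ht' heq
    have hq : h * t' + 2 * t' ^ 2 = h * t + 2 * t ^ 2 :=
      mul_right_cancel₀ hAne (heq.trans hteq.symm)
    have hfac : (t' - t) * (h + 2 * (t' + t)) = 0 := by linear_combination hq
    rcases mul_eq_zero.1 hfac with h1 | h1
    · linarith
    · nlinarith
  -- sums at the candidate point
  have hsum1 : ∑ i, t / lam i = t * A := by
    rw [hA, Finset.mul_sum]
    exact Finset.sum_congr rfl fun i _ => by rw [div_eq_mul_inv]
  have hsum2 : ∑ i, lam i * (t / lam i) ^ 2 = t ^ 2 * A := by
    rw [hA, Finset.mul_sum]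
    refine Finset.sum_congr rfl fun i _ => ?_
    have : lam i ≠ 0 := ne_of_gt (hlam i)
    field_simp
  have hconstr : h * ∑ i, t / lam i + 2 * ∑ i, lam i * (t / lam i) ^ 2 = S := by
    rw [hsum1, hsum2]; linear_combination hteq
  refine ⟨t, htnn, hteq, htuniq, fun i => div_nonneg htnn (hlam i).le, hconstr, ?_, ?_, ?_⟩
  · intro i j
    rw [mul_div_cancel₀ _ (ne_of_gt (hlam i)), mul_div_cancel₀ _ (ne_of_gt (hlam j))]
  · -- uniqueness of the common point
    intro y hy hyc hcom
    set c := lam i0 * y i0 with hc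
    have hcnn : 0 ≤ c := mul_nonneg (hlam i0).le (hy i0)
    have hyi : ∀ i, y i = c / lam i := fun i => by
      rw [hc, ← hcom i i0, mul_comm, mul_div_assoc,
        div_self (ne_of_gt (hlam i)), mul_one]
    have hs1 : ∑ i, y i = c * A := by
      rw [hA, Finset.mul_sum]
      exact Finset.sum_congr rfl fun i _ => by rw [hyi i, div_eq_mul_inv]
    have hs2 : ∑ i, lam i * y i ^ 2 = c ^ 2 * A := by
      rw [hA, Finset.mul_sum]
      refine Finset.sum_congr rfl fun i _ => ?_
      have : lam i ≠ 0 := ne_of_gt (hlam i)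
      rw [hyi i]
      field_simp
    have : (h * c + 2 * c ^ 2) * A = S := by
      rw [hs1, hs2] at hyc; linear_combination hyc
    have hct : c = t := htuniq c hcnn this
    funext i
    rw [hyi i, hct]
  · -- strict minimality
    intro y hy hyc hne
    rw [hsum2]
    set P := ∑ i, y i with hP
    set Q := ∑ i, lam i * y i ^ 2 with hQ
    -- find a coordinate where y differs
    have hex : ∃ i, y i ≠ t / lam i := by
      by_contra hc
      push_neg at hc
      exact hne (funext hc)
    obtain ⟨j, hj⟩ := hex
    have hkey : 0 < ∑ i, lam i * (y i - t / lam i) ^ 2 := by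
      refine Finset.sum_pos' (fun i _ => mul_nonneg (hlam i).le (sq_nonneg _))
        ⟨j, mem_univ _, ?_⟩
      have hne0 : y j - t / lam j ≠ 0 := sub_ne_zero.2 hj
      exact mul_pos (hlam j)
        (lt_of_le_of_ne (sq_nonneg _) (Ne.symm (pow_ne_zero 2 hne0)))
    have hexp : ∑ i, lam i * (y i - t / lam i) ^ 2 = Q - 2 * t * P + t ^ 2 * A := by
      have hterm : ∀ i ∈ Finset.univ, lam i * (y i - t / lam i) ^ 2 =
          lam i * y i ^ 2 - 2 * t * y i + t ^ 2 * (lam i)⁻¹ := by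
        intro i _
        have : lam i ≠ 0 := ne_of_gt (hlam i)
        field_simp
        ring
      rw [Finset.sum_congr rfl hterm, Finset.sum_add_distrib, Finset.sum_sub_distrib,
        ← Finset.mul_sum, ← Finset.mul_sum, ← hP, ← hQ, ← hA]
    rw [hexp] at hkey
    -- now pure algebra: hyc : h * P + 2 * Q = S, hteq, hkey
    by_contra hcon
    push_neg at hcon
    have hQle : Q ≤ t ^ 2 * A := hcon
    have hPge : 0 ≤ P - t * A := by nlinarith [hyc, hteq]
    nlinarith [mul_nonneg htnn hPge]
end

section
/- Let n ≥ 2 be an integer, let λ₁, …, λₙ and h and S be positive real numbers. For (L₁, …, Lₙ) with Lᵢ ≥ 0 and h(L₁ + ⋯ + Lₙ) + 2(λ₁L₁² + ⋯ + λₙLₙ²) = S, define rᵢ = 2λᵢLᵢ. Then λ₁L₁² + ⋯ + λₙLₙ² attains its minimum over all such (L₁, …, Lₙ) if and only if r₁ = r₂ = ⋯ = rₙ. -/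
/-!
Completing the square with weights `1/(2λᵢ)`: on the constraint surface the base area is a
decreasing affine function of `∑yᵢ`, and if `x` lies on it with all radii `2λᵢxᵢ` equal to `c`,
then every `y` on it satisfies `∑ (2λᵢyᵢ - c)² / (2λᵢ) = (h + 2c)(∑xᵢ - ∑yᵢ)`. So `x` minimises
the base area and any other minimiser has all radii equal to `c`. Such an `x` exists by the
intermediate value theorem.
-/

open Finset

namespace TangentialCylinders

variable {ι : Type*} [Fintype ι] (lam : ι → ℝ) (h : ℝ)

def baseArea (y : ι → ℝ) : ℝ := ∑ i, lam i * y i ^ 2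

def surfaceArea (y : ι → ℝ) : ℝ := h * ∑ i, y i + 2 * baseArea lam y

variable {lam h}

theorem sum_sq_sub_div_eq (hlam : ∀ i, lam i ≠ 0) (y : ι → ℝ) (c : ℝ) :
    ∑ i, (2 * lam i * y i - c) ^ 2 / (2 * lam i) =
      2 * baseArea lam y - 2 * c * ∑ i, y i + c ^ 2 * ∑ i, 1 / (2 * lam i) := by
  have hterm : ∀ i, (2 * lam i * y i - c) ^ 2 / (2 * lam i) =
      2 * (lam i * y i ^ 2) - 2 * c * y i + c ^ 2 * (1 / (2 * lam i)) := by
    intro i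
    field_simp [hlam i]
    ring
  simp only [hterm, sum_add_distrib, sum_sub_distrib, ← mul_sum, baseArea]

theorem sum_sq_sub_div_eq_of_surfaceArea_eq (hlam : ∀ i, lam i ≠ 0) {x y : ι → ℝ} {c : ℝ}
    (hxc : ∀ i, 2 * lam i * x i = c) (hxy : surfaceArea lam h x = surfaceArea lam h y) :
    ∑ i, (2 * lam i * y i - c) ^ 2 / (2 * lam i) = (h + 2 * c) * (∑ i, x i - ∑ i, y i) := by
  have hx : ∑ i, (2 * lam i * x i - c) ^ 2 / (2 * lam i) = 0 := by simp [hxc]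
  rw [sum_sq_sub_div_eq hlam] at hx ⊢
  unfold surfaceArea at hxy
  linear_combination hx - hxy

theorem baseArea_le_iff (hh : 0 < h) {x y : ι → ℝ}
    (hxy : surfaceArea lam h x = surfaceArea lam h y) :
    baseArea lam x ≤ baseArea lam y ↔ ∑ i, y i ≤ ∑ i, x i := by
  unfold surfaceArea at hxy
  constructor <;> intro hle <;> nlinarith

theorem baseArea_le_of_radii_eq (hlam : ∀ i, 0 < lam i) (hh : 0 < h) {x y : ι → ℝ} {c : ℝ}
    (hc : 0 ≤ c) (hxc : ∀ i, 2 * lam i * x i = c)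
    (hxy : surfaceArea lam h x = surfaceArea lam h y) :
    baseArea lam x ≤ baseArea lam y := by
  have hsq := sum_sq_sub_div_eq_of_surfaceArea_eq (fun i => (hlam i).ne') hxc hxy
  have hnonneg : 0 ≤ ∑ i, (2 * lam i * y i - c) ^ 2 / (2 * lam i) :=
    sum_nonneg fun i _ => div_nonneg (sq_nonneg _) (by linarith [hlam i])
  rw [baseArea_le_iff hh hxy]
  nlinarith

theorem radii_eq_of_baseArea_le (hlam : ∀ i, 0 < lam i) (hh : 0 < h) {x y : ι → ℝ} {c : ℝ}
    (hc : 0 ≤ c) (hxc : ∀ i, 2 * lam i * x i = c)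
    (hxy : surfaceArea lam h x = surfaceArea lam h y) (hle : baseArea lam y ≤ baseArea lam x) :
    ∀ i, 2 * lam i * y i = c := by
  have hsq := sum_sq_sub_div_eq_of_surfaceArea_eq (fun i => (hlam i).ne') hxc hxy
  have hterm_nonneg : ∀ i ∈ univ, 0 ≤ (2 * lam i * y i - c) ^ 2 / (2 * lam i) :=
    fun i _ => div_nonneg (sq_nonneg _) (by linarith [hlam i])
  have hsum_le : ∑ i, x i ≤ ∑ i, y i := (baseArea_le_iff hh hxy.symm).mp hle
  have hzero : ∑ i, (2 * lam i * y i - c) ^ 2 / (2 * lam i) = 0 :=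
    le_antisymm (by nlinarith) (sum_nonneg hterm_nonneg)
  intro i
  have hi := (sum_eq_zero_iff_of_nonneg hterm_nonneg).mp hzero i (mem_univ i)
  have hsq_zero : (2 * lam i * y i - c) ^ 2 = 0 :=
    (div_eq_zero_iff.mp hi).resolve_right (by linarith [hlam i])
  exact sub_eq_zero.mp (pow_eq_zero_iff two_ne_zero |>.mp hsq_zero)

theorem surfaceArea_radii_eq (hlam : ∀ i, lam i ≠ 0) (c : ℝ) :
    surfaceArea lam h (fun i => c / (2 * lam i)) = (h * c + c ^ 2) * ∑ i, 1 / (2 * lam i) := by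
  have hterm : ∀ i, lam i * (c / (2 * lam i)) ^ 2 = c ^ 2 / 2 * (1 / (2 * lam i)) := by
    intro i
    field_simp [hlam i]
  have hsum : ∑ i, c / (2 * lam i) = c * ∑ i, 1 / (2 * lam i) := by
    rw [mul_sum]; simp only [mul_one_div]
  rw [surfaceArea, baseArea, hsum]
  simp only [hterm, ← mul_sum]
  ring

theorem exists_surfaceArea_radii_eq [Nonempty ι] (hlam : ∀ i, 0 < lam i) (hh : 0 < h)
    {S : ℝ} (hS : 0 ≤ S) : ∃ c, 0 ≤ c ∧ surfaceArea lam h (fun i => c / (2 * lam i)) = S := by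
  set W := ∑ i, 1 / (2 * lam i)
  have hW : 0 < W := sum_pos (fun i _ => by have := hlam i; positivity) univ_nonempty
  let f : ℝ → ℝ := fun c => (h * c + c ^ 2) * W
  have hf : ContinuousOn f (Set.Icc 0 (S / (h * W))) := by fun_prop
  have hbound : S ≤ f (S / (h * W)) := by
    have : h * (S / (h * W)) * W = S := by field_simp
    nlinarith [sq_nonneg (S / (h * W))]
  obtain ⟨c, hc, hfc⟩ := intermediate_value_Icc (by positivity) hf ⟨by simpa [f] using hS, hbound⟩
  exact ⟨c, hc.1, (surfaceArea_radii_eq (fun i => (hlam i).ne') c).trans hfc⟩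

end TangentialCylinders

open TangentialCylinders in
/-- Corollary 4 (analytic content): with `rᵢ = 2λᵢLᵢ` (inradius of a tangential polygon or
circle in class `[λᵢ]`), on the constraint set of fixed total cylinder surface area
`h∑Lᵢ + 2∑λᵢLᵢ² = S`, the total base area `∑ λᵢ Lᵢ²` attains its minimum at a point
iff `r₁ = r₂ = ⋯ = rₙ` at that point. -/
theorem stmt_13 (n : ℕ) (hn : 2 ≤ n) (lam : Fin n → ℝ) (hlam : ∀ i, 0 < lam i)
    (h S : ℝ) (hh : 0 < h) (hS : 0 < S)
    (Ls : Fin n → ℝ) (hLs : ∀ i, 0 ≤ Ls i)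
    (hcon : h * ∑ i, Ls i + 2 * ∑ i, lam i * Ls i ^ 2 = S)
    (r : Fin n → ℝ) (hr : ∀ i, r i = 2 * lam i * Ls i) :
    (∀ y : Fin n → ℝ, (∀ i, 0 ≤ y i) →
        h * ∑ i, y i + 2 * ∑ i, lam i * y i ^ 2 = S →
        ∑ i, lam i * Ls i ^ 2 ≤ ∑ i, lam i * y i ^ 2) ↔
      ∀ i j, r i = r j := by
  have : Nonempty (Fin n) := ⟨⟨0, by omega⟩⟩
  constructor
  · intro hmin
    obtain ⟨c, hc, hxS⟩ := exists_surfaceArea_radii_eq hlam hh hS.le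
    have hxc : ∀ i, 2 * lam i * (c / (2 * lam i)) = c := fun i => by
      field_simp [(hlam i).ne']
    have hx_nonneg : ∀ i, 0 ≤ c / (2 * lam i) := fun i => by have := hlam i; positivity
    have hLs_radii := radii_eq_of_baseArea_le hlam hh hc hxc (hxS.trans hcon.symm)
      (hmin _ hx_nonneg hxS)
    intro i j
    rw [hr, hr, hLs_radii, hLs_radii]
  · intro hreq y _ hyS
    let i₀ : Fin n := ⟨0, by omega⟩
    have hc : 0 ≤ r i₀ := by rw [hr]; have := hlam i₀; have := hLs i₀; positivity
    exact baseArea_le_of_radii_eq hlam hh hc (fun i => (hr i).symm.trans (hreq i i₀))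
      (hcon.trans hyS.symm)
end

section
/- Let n ≥ 2 and m ≥ 2 be integers, let λ₁, …, λₙ be positive real numbers, and let A > 0. For nonnegative reals A₁, …, Aₙ with A₁ + ⋯ + Aₙ = A, define rᵢ = m·λᵢ·Aᵢ^{1/(m−1)}. Then λ₁A₁^{m/(m−1)} + ⋯ + λₙAₙ^{m/(m−1)} attains its minimum over all such (A₁, …, Aₙ) if and only if r₁ = r₂ = ⋯ = rₙ. -/
/-! With `p = m/(m-1)`, the total volume is the separable convex function `∑ λᵢ Aᵢ^p`, whose
partial derivatives `p λᵢ Aᵢ^(p-1)` are proportional to the radii `rᵢ = m λᵢ Aᵢ^(1/(m-1))`.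
If all partial derivatives agree, summing the tangent-line inequalities of `x ↦ x^p` shows that
`(Aᵢ)` is a minimum. Conversely, if `rᵢ < rⱼ` then `Aⱼ > 0` (as `rⱼ = 0` when `Aⱼ = 0`), and
moving a little mass from `Aⱼ` to `Aᵢ` strictly decreases the total volume. -/

theorem Real.rpow_add_mul_rpow_sub_one_mul_sub_le {p : ℝ} (hp : 1 ≤ p) {a y : ℝ} (ha : 0 ≤ a)
    (hy : 0 ≤ y) : a ^ p + p * a ^ (p - 1) * (y - a) ≤ y ^ p := by
  rcases ha.eq_or_lt with rfl | ha
  · rcases hp.eq_or_lt with rfl | hp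
    · simp
    · simp [Real.zero_rpow (by linarith : p ≠ 0), Real.zero_rpow (by linarith : p - 1 ≠ 0)]
      positivity
  · have hbernoulli := one_add_mul_self_le_rpow_one_add
      (by linarith [div_nonneg hy ha.le] : -1 ≤ y / a - 1) hp
    rw [add_sub_cancel] at hbernoulli
    calc a ^ p + p * a ^ (p - 1) * (y - a) = (1 + p * (y / a - 1)) * a ^ p := by
          rw [Real.rpow_sub_one ha.ne']
          field_simp
      _ ≤ (y / a) ^ p * a ^ p := by gcongr
      _ = y ^ p := by rw [← Real.mul_rpow (div_nonneg hy ha.le) ha.le, div_mul_cancel₀ _ ha.ne']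

theorem Fintype.sum_update_update_sub {ι α M : Type*} [Fintype ι] [DecidableEq ι]
    [AddCommGroup M] (f : ι → α → M) (x : ι → α) {i j : ι} (hij : i ≠ j) (u v : α) :
    ∑ k, f k (Function.update (Function.update x i u) j v k) - ∑ k, f k (x k) =
      (f i u - f i (x i)) + (f j v - f j (x j)) := by
  rw [← Finset.sum_sub_distrib, Fintype.sum_eq_add i j hij]
  · simp [Function.update_of_ne hij]
  · rintro k ⟨hki, hkj⟩
    simp [Function.update_of_ne hki, Function.update_of_ne hkj]

theorem exists_mem_Ioo_mul_rpow_add_lt_mul_rpow_sub {q li lj a b : ℝ} (hq : 0 ≤ q) (hb : 0 < b)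
    (h : li * a ^ q < lj * b ^ q) : ∃ ε ∈ Set.Ioo 0 b, li * (a + ε) ^ q < lj * (b - ε) ^ q := by
  have hnear : ∀ᶠ ε in nhds 0, li * (a + ε) ^ q < lj * (b - ε) ^ q :=
    ContinuousAt.eventually_lt (by fun_prop (disch := exact Or.inr hq))
      (by fun_prop (disch := exact Or.inr hq)) (by simpa using h)
  exact (Filter.Eventually.and (Ioo_mem_nhdsGT hb) (nhdsWithin_le_nhds hnear)).exists

theorem mul_rpow_add_add_mul_rpow_sub_add_le {p li lj a b ε : ℝ} (hp : 1 ≤ p) (hli : 0 ≤ li)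
    (hlj : 0 ≤ lj) (ha : 0 ≤ a) (hε : 0 ≤ ε) (hεb : ε ≤ b) :
    li * (a + ε) ^ p + lj * (b - ε) ^ p + p * ε * (lj * (b - ε) ^ (p - 1) - li * (a + ε) ^ (p - 1))
      ≤ li * a ^ p + lj * b ^ p := by
  have hi := mul_le_mul_of_nonneg_left
    (Real.rpow_add_mul_rpow_sub_one_mul_sub_le hp (by linarith : 0 ≤ a + ε) ha) hli
  have hj := mul_le_mul_of_nonneg_left
    (Real.rpow_add_mul_rpow_sub_one_mul_sub_le hp (by linarith : 0 ≤ b - ε) (hε.trans hεb)) hlj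
  linarith

section WeightedPowerSum

variable {ι : Type*} [Fintype ι] {p : ℝ} {lam a : ι → ℝ}

theorem sum_mul_rpow_le_of_mul_rpow_sub_one_eq (hp : 1 ≤ p) (hlam : ∀ i, 0 ≤ lam i)
    (ha : ∀ i, 0 ≤ a i) {c : ℝ} (hc : ∀ i, lam i * a i ^ (p - 1) = c) {y : ι → ℝ}
    (hy : ∀ i, 0 ≤ y i) (hsum : ∑ i, y i = ∑ i, a i) :
    ∑ i, lam i * a i ^ p ≤ ∑ i, lam i * y i ^ p := by
  have htangent : ∀ i, lam i * a i ^ p + p * c * (y i - a i) ≤ lam i * y i ^ p := fun i => by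
    calc lam i * a i ^ p + p * c * (y i - a i)
        = lam i * (a i ^ p + p * a i ^ (p - 1) * (y i - a i)) := by rw [← hc i]; ring
      _ ≤ lam i * y i ^ p := by
        gcongr
        · exact hlam i
        · exact Real.rpow_add_mul_rpow_sub_one_mul_sub_le hp (ha i) (hy i)
  have hshift : ∑ i, p * c * (y i - a i) = 0 := by
    rw [← Finset.mul_sum, Finset.sum_sub_distrib, hsum, sub_self, mul_zero]
  calc ∑ i, lam i * a i ^ p = ∑ i, (lam i * a i ^ p + p * c * (y i - a i)) := by
        rw [Finset.sum_add_distrib, hshift, add_zero]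
    _ ≤ ∑ i, lam i * y i ^ p := Finset.sum_le_sum fun i _ => htangent i

theorem mul_rpow_sub_one_le_of_isMin (hp : 1 < p) (hlam : ∀ i, 0 ≤ lam i) (ha : ∀ i, 0 ≤ a i)
    (hmin : ∀ y : ι → ℝ, (∀ i, 0 ≤ y i) → ∑ i, y i = ∑ i, a i →
      ∑ i, lam i * a i ^ p ≤ ∑ i, lam i * y i ^ p) (i j : ι) :
    lam j * a j ^ (p - 1) ≤ lam i * a i ^ (p - 1) := by
  classical
  by_contra! hlt
  have hij : i ≠ j := by rintro rfl; exact lt_irrefl _ hlt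
  have haj : 0 < a j := by
    refine (ha j).lt_of_ne fun h => ?_
    rw [← h, Real.zero_rpow (by linarith), mul_zero] at hlt
    exact hlt.not_ge (mul_nonneg (hlam i) (Real.rpow_nonneg (ha i) _))
  obtain ⟨ε, ⟨hε, hεa⟩, hgap⟩ :=
    exists_mem_Ioo_mul_rpow_add_lt_mul_rpow_sub (by linarith) haj hlt
  set y := Function.update (Function.update a i (a i + ε)) j (a j - ε)
  have hy : ∀ k, 0 ≤ y k := by
    intro k
    by_cases hkj : k = j
    · simp only [y, hkj, Function.update_self]; linarith
    by_cases hki : k = i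
    · simp only [y, hki, Function.update_of_ne hij, Function.update_self]; linarith [ha i]
    · simp only [y, Function.update_of_ne hkj, Function.update_of_ne hki, ha k]
  have hsum : ∑ k, y k = ∑ k, a k := by
    have := Fintype.sum_update_update_sub (fun _ t => t) a hij (a i + ε) (a j - ε)
    linarith
  have hvol := Fintype.sum_update_update_sub (fun k t => lam k * t ^ p) a hij (a i + ε) (a j - ε)
  have htransfer := mul_rpow_add_add_mul_rpow_sub_add_le hp.le (hlam i) (hlam j) (ha i) hε.le hεa.le
  have hdecrease : 0 < p * ε * (lam j * (a j - ε) ^ (p - 1) - lam i * (a i + ε) ^ (p - 1)) :=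
    mul_pos (by positivity) (sub_pos.2 hgap)
  linarith [hmin y hy hsum]

theorem isMin_sum_mul_rpow_iff (hp : 1 < p) (hlam : ∀ i, 0 ≤ lam i) (ha : ∀ i, 0 ≤ a i) :
    (∀ y : ι → ℝ, (∀ i, 0 ≤ y i) → ∑ i, y i = ∑ i, a i →
      ∑ i, lam i * a i ^ p ≤ ∑ i, lam i * y i ^ p) ↔
      ∀ i j, lam i * a i ^ (p - 1) = lam j * a j ^ (p - 1) := by
  refine ⟨fun hmin i j => le_antisymm (mul_rpow_sub_one_le_of_isMin hp hlam ha hmin j i)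
    (mul_rpow_sub_one_le_of_isMin hp hlam ha hmin i j), fun heq y hy hsum => ?_⟩
  rcases isEmpty_or_nonempty ι with _ | ⟨⟨i₀⟩⟩
  · simp
  · exact sum_mul_rpow_le_of_mul_rpow_sub_one_eq hp.le hlam ha (fun i => heq i i₀) hy hsum

end WeightedPowerSum

theorem stmt_16_general (n m : ℕ) (hm : 2 ≤ m) (lam : Fin n → ℝ)
    (hlam : ∀ i, 0 < lam i) (A : ℝ)
    (As : Fin n → ℝ) (hAs : ∀ i, 0 ≤ As i) (hsum : ∑ i, As i = A)
    (r : Fin n → ℝ) (hr : ∀ i, r i = m * lam i * As i ^ ((1 : ℝ) / ((m : ℝ) - 1))) :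
    (∀ y : Fin n → ℝ, (∀ i, 0 ≤ y i) → ∑ i, y i = A →
        ∑ i, lam i * As i ^ ((m : ℝ) / ((m : ℝ) - 1)) ≤
          ∑ i, lam i * y i ^ ((m : ℝ) / ((m : ℝ) - 1))) ↔
      ∀ i j, r i = r j := by
  have hm1 : (1 : ℝ) < m := by exact_mod_cast hm
  have hp : 1 < (m : ℝ) / (m - 1) := (one_lt_div (by linarith)).2 (by linarith)
  have hexp : (m : ℝ) / (m - 1) - 1 = 1 / (m - 1) := by
    field_simp [(by linarith : (m : ℝ) - 1 ≠ 0)]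
    ring
  have hr_eq : ∀ i j, r i = r j ↔
      lam i * As i ^ ((m : ℝ) / (m - 1) - 1) = lam j * As j ^ ((m : ℝ) / (m - 1) - 1) := by
    intro i j
    rw [hexp, hr, hr, mul_assoc, mul_assoc, mul_right_inj' (by positivity)]
  subst hsum
  simp_rw [hr_eq]
  exact isMin_sum_mul_rpow_iff hp (fun i => (hlam i).le) hAs

/-- Corollary 3 (analytic content, dimension `m`): with `rᵢ = m λᵢ Aᵢ^{1/(m−1)}`
(the inradius of a hypersphere or convex tangential polytope of surface area `Aᵢ` in
class `[λᵢ]`), the total volume `∑ λᵢ Aᵢ^{m/(m−1)}` attains its minimum over all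
nonnegative `(A₁,…,Aₙ)` with `∑ Aᵢ = A` iff `r₁ = r₂ = ⋯ = rₙ`. -/
theorem stmt_16 (n m : ℕ) (hn : 2 ≤ n) (hm : 2 ≤ m) (lam : Fin n → ℝ)
    (hlam : ∀ i, 0 < lam i) (A : ℝ) (hA : 0 < A)
    (As : Fin n → ℝ) (hAs : ∀ i, 0 ≤ As i) (hsum : ∑ i, As i = A)
    (r : Fin n → ℝ) (hr : ∀ i, r i = m * lam i * As i ^ ((1 : ℝ) / ((m : ℝ) - 1))) :
    (∀ y : Fin n → ℝ, (∀ i, 0 ≤ y i) → ∑ i, y i = A →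
        ∑ i, lam i * As i ^ ((m : ℝ) / ((m : ℝ) - 1)) ≤
          ∑ i, lam i * y i ^ ((m : ℝ) / ((m : ℝ) - 1))) ↔
      ∀ i j, r i = r j :=
  stmt_16_general n m hm lam hlam A As hAs hsum r hr
end
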